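/- arXiv:2410.03023 — 2 statements merged into one kernel-verified Lean document; each statement's English description precedes it below -/
import Mathlib

section
/- (Feasibility of CAoLF) Let f₁, …, f_m : ℝⁿ → ℝ, where each f_i is M_i-Lipschitz with respect to the Euclidean norm (M_i > 0), and for each i let I⁺_i, I⁻_i be disjoint subsets of coordinate indices such that f_i is nondecreasing in the j-th coordinate for every j ∈ I⁺_i and nonincreasing in the j-th coordinate for every j ∈ I⁻_i. Let the operator G_{f_i} be defined coordinatewise by G_{f_i}(x,y)_j = max(x_j − y_j, 0) if j ∈ I⁺_i, max(y_j − x_j, 0) if j ∈ I⁻_i, and x_j − y_j otherwise. Let x₁, …, x_m ∈ ℝⁿ with v_i := f_i(x_i) > 0. If x ∈ ℝⁿ and γ ≥ 0 satisfy ‖G_{f_i}(x, x_i)‖₂ ≤ γ·v_i/M_i for every i = 1, …, m, then f_i(x) ≤ (1 + γ)·v_i for every i = 1, …, m; that is, x is a relative γ-competitive solution. -/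
/-!
Fix `i` and write `y = xᵢ`. Moving `x` to `z` with `z_j = max(x_j, y_j)` for `j ∈ I⁺`,
`z_j = min(x_j, y_j)` for `j ∈ I⁻` and `z_j = x_j` otherwise changes one coordinate at a time
in a direction in which `fᵢ` does not decrease, so `fᵢ(x) ≤ fᵢ(z)`. Coordinatewise
`|z_j - y_j| = |G_{fᵢ}(x, y)_j|`, hence the Lipschitz bound gives
`fᵢ(z) ≤ vᵢ + Mᵢ ‖G_{fᵢ}(x, y)‖ ≤ (1 + γ) vᵢ`.
-/

open Function

theorem le_of_forall_update_le {ι α β : Type*} [Fintype ι] [DecidableEq ι] [Preorder β]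
    (f : (ι → α) → β) (x z : ι → α)
    (h : ∀ j u, f (update u j (x j)) ≤ f (update u j (z j))) :
    f x ≤ f z := by
  let mix (S : Finset ι) : ι → α := fun j => if j ∈ S then z j else x j
  suffices ∀ S, f x ≤ f (mix S) by simpa [mix] using this Finset.univ
  intro S
  induction S using Finset.induction_on with
  | empty => simp [mix]
  | @insert a s has ih =>
    have hx : mix s = update (mix s) a (x a) := by
      ext j; by_cases hj : j = a
      · subst hj; simp [mix, has]
      · simp [hj]
    have hz : mix (insert a s) = update (mix s) a (z a) := by
      ext j; by_cases hj : j = a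
      · subst hj; simp [mix]
      · simp [mix, hj]
    calc f x ≤ f (mix s) := ih
      _ = f (update (mix s) a (x a)) := by rw [← hx]
      _ ≤ f (update (mix s) a (z a)) := h a _
      _ = f (mix (insert a s)) := by rw [hz]

section MonotoneComparison

variable {n : ℕ} (Ip Im : Finset (Fin n))

noncomputable def monotoneSup (x y : EuclideanSpace ℝ (Fin n)) : EuclideanSpace ℝ (Fin n) :=
  WithLp.toLp 2 fun j =>
    if j ∈ Ip then max (x j) (y j) else if j ∈ Im then min (x j) (y j) else x j

variable {Ip Im}

theorem le_apply_monotoneSup (f : EuclideanSpace ℝ (Fin n) → ℝ)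
    (hmono : ∀ j ∈ Ip, ∀ u : EuclideanSpace ℝ (Fin n),
      Monotone fun t => f (WithLp.toLp 2 (update u j t)))
    (hanti : ∀ j ∈ Im, ∀ u : EuclideanSpace ℝ (Fin n),
      Antitone fun t => f (WithLp.toLp 2 (update u j t)))
    (x y : EuclideanSpace ℝ (Fin n)) :
    f x ≤ f (monotoneSup Ip Im x y) := by
  refine le_of_forall_update_le (f ∘ WithLp.toLp 2) x.ofLp (monotoneSup Ip Im x y).ofLp ?_
  intro j u
  by_cases hp : j ∈ Ip
  · exact hmono j hp (WithLp.toLp 2 u) (by simp [monotoneSup, hp])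
  by_cases hm : j ∈ Im
  · exact hanti j hm (WithLp.toLp 2 u) (by simp [monotoneSup, hp, hm])
  · simp [monotoneSup, hp, hm]

theorem norm_monotoneSup_sub (x y g : EuclideanSpace ℝ (Fin n))
    (hg : ∀ j, g j = if j ∈ Ip then max (x j - y j) 0
      else if j ∈ Im then max (y j - x j) 0 else x j - y j) :
    ‖monotoneSup Ip Im x y - y‖ = ‖g‖ := by
  have hcoord : ∀ j, |monotoneSup Ip Im x y j - y j| = |g j| := by
    intro j
    rw [hg j]
    by_cases hp : j ∈ Ip
    · simp only [monotoneSup, hp, if_true]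
      rcases le_total (x j) (y j) with h | h <;> simp [h]
    by_cases hm : j ∈ Im
    · simp only [monotoneSup, hp, hm, if_true, if_false]
      rw [← abs_neg]
      rcases le_total (x j) (y j) with h | h <;> simp [h]
    · simp [monotoneSup, hp, hm]
  simp only [EuclideanSpace.norm_eq, PiLp.sub_apply, Real.norm_eq_abs, hcoord]

end MonotoneComparison

theorem stmt4_general {n m : ℕ} (f : Fin m → EuclideanSpace ℝ (Fin n) → ℝ)
    (M : Fin m → ℝ) (hM : ∀ i, 0 < M i)
    (hf : ∀ i, ∀ x y : EuclideanSpace ℝ (Fin n), |f i x - f i y| ≤ M i * ‖x - y‖)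
    (Ip Im : Fin m → Finset (Fin n))
    (hmono : ∀ i, ∀ j ∈ Ip i, ∀ u : EuclideanSpace ℝ (Fin n),
      Monotone fun t => f i (WithLp.toLp 2 (Function.update u j t)))
    (hanti : ∀ i, ∀ j ∈ Im i, ∀ u : EuclideanSpace ℝ (Fin n),
      Antitone fun t => f i (WithLp.toLp 2 (Function.update u j t)))
    (xs : Fin m → EuclideanSpace ℝ (Fin n))
    (v : Fin m → ℝ) (hv : ∀ i, v i = f i (xs i))
    (G : Fin m → EuclideanSpace ℝ (Fin n) → EuclideanSpace ℝ (Fin n) →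
      EuclideanSpace ℝ (Fin n))
    (hG : ∀ i (x y : EuclideanSpace ℝ (Fin n)) (j : Fin n),
      G i x y j = if j ∈ Ip i then max (x j - y j) 0
        else if j ∈ Im i then max (y j - x j) 0 else x j - y j)
    (x : EuclideanSpace ℝ (Fin n)) (γ : ℝ)
    (hfeas : ∀ i, ‖G i x (xs i)‖ ≤ γ * v i / M i) :
    ∀ i, f i x ≤ (1 + γ) * v i := by
  intro i
  set z := monotoneSup (Ip i) (Im i) x (xs i)
  have hz : ‖z - xs i‖ = ‖G i x (xs i)‖ := norm_monotoneSup_sub x (xs i) _ (hG i x (xs i))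
  have hMG : M i * ‖G i x (xs i)‖ ≤ γ * v i := (le_div_iff₀' (hM i)).mp (hfeas i)
  calc f i x ≤ f i z := le_apply_monotoneSup (f i) (hmono i) (hanti i) x (xs i)
    _ ≤ f i (xs i) + M i * ‖z - xs i‖ :=
      sub_le_iff_le_add'.mp ((le_abs_self _).trans (hf i z (xs i)))
    _ ≤ (1 + γ) * v i := by rw [hz, ← hv i]; linarith

/-- Feasibility of CAoLF: if `‖G_{fᵢ}(x, xᵢ)‖₂ ≤ γ·vᵢ/Mᵢ` for all `i`,
then `x` is a relative `γ`-competitive solution. -/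
theorem stmt4 {n m : ℕ} (f : Fin m → EuclideanSpace ℝ (Fin n) → ℝ)
    (M : Fin m → ℝ) (hM : ∀ i, 0 < M i)
    (hf : ∀ i, ∀ x y : EuclideanSpace ℝ (Fin n), |f i x - f i y| ≤ M i * ‖x - y‖)
    (Ip Im : Fin m → Finset (Fin n)) (hdisj : ∀ i, Disjoint (Ip i) (Im i))
    (hmono : ∀ i, ∀ j ∈ Ip i, ∀ u : EuclideanSpace ℝ (Fin n),
      Monotone fun t => f i (WithLp.toLp 2 (Function.update u j t)))
    (hanti : ∀ i, ∀ j ∈ Im i, ∀ u : EuclideanSpace ℝ (Fin n),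
      Antitone fun t => f i (WithLp.toLp 2 (Function.update u j t)))
    (xs : Fin m → EuclideanSpace ℝ (Fin n))
    (v : Fin m → ℝ) (hv : ∀ i, v i = f i (xs i)) (hvpos : ∀ i, 0 < v i)
    (G : Fin m → EuclideanSpace ℝ (Fin n) → EuclideanSpace ℝ (Fin n) →
      EuclideanSpace ℝ (Fin n))
    (hG : ∀ i (x y : EuclideanSpace ℝ (Fin n)) (j : Fin n),
      G i x y j = if j ∈ Ip i then max (x j - y j) 0
        else if j ∈ Im i then max (y j - x j) 0 else x j - y j)
    (x : EuclideanSpace ℝ (Fin n)) (γ : ℝ) (hγ : 0 ≤ γ)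
    (hfeas : ∀ i, ‖G i x (xs i)‖ ≤ γ * v i / M i) :
    ∀ i, f i x ≤ (1 + γ) * v i :=
  stmt4_general f M hM hf Ip Im hmono hanti xs v hv G hG x γ hfeas
end

section
/- (Stability under approximate Lipschitz constants) Let E be a real normed space, K ⊆ E, and let f₁, …, f_m : E → ℝ, where each f_i is M_i-Lipschitz (M_i > 0). Let x₁, …, x_m ∈ E with v_i := f_i(x_i) > 0, let κ₁, …, κ_m > 0 with κ_max := max_i κ_i, and set approximated constants M̃_i := κ_i·M_i. Define Γ(M) = {γ ∈ ℝ : γ ≥ 0 and there exists x ∈ K with ‖x − x_i‖ ≤ γ·v_i/M_i for all i}, let γ* := inf Γ(M), and let γ̃ := inf Γ(M̃). Assume Γ(M) is nonempty, and let x ∈ K satisfy ‖x − x_i‖ ≤ γ̃·v_i/M̃_i for all i (i.e., x is a solution of the perturbed problem). Then |f_i(x) − v_i| ≤ (κ_max/κ_i)·γ*·v_i for every i = 1, …, m. -/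
/-- The feasible-γ set `Γ(M)`. -/
def Gamma {E : Type*} [NormedAddCommGroup E] {m : ℕ}
    (K : Set E) (xs : Fin m → E) (v M : Fin m → ℝ) : Set ℝ :=
  {γ : ℝ | 0 ≤ γ ∧ ∃ x ∈ K, ∀ i, ‖x - xs i‖ ≤ γ * v i / M i}

/-- Stability under approximate Lipschitz constants: if `x ∈ K` solves
the perturbed problem (with constants `M̃ᵢ = κᵢ·Mᵢ` and `γ̃ = inf Γ(M̃)`), then
`|fᵢ(x) − vᵢ| ≤ (κ_max/κᵢ)·γ*·vᵢ` for every `i`, where `γ* = inf Γ(M)`. -/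
theorem stmt9 {E : Type*} [NormedAddCommGroup E] [NormedSpace ℝ E] {m : ℕ}
    (K : Set E) (f : Fin m → E → ℝ) (M : Fin m → ℝ) (hM : ∀ i, 0 < M i)
    (hf : ∀ i, ∀ x y : E, |f i x - f i y| ≤ M i * ‖x - y‖)
    (xs : Fin m → E) (v : Fin m → ℝ) (hv : ∀ i, v i = f i (xs i))
    (hvpos : ∀ i, 0 < v i)
    (κ : Fin m → ℝ) (hκ : ∀ i, 0 < κ i)
    (κmax : ℝ) (hκmax : IsGreatest (Set.range κ) κmax)
    (hne : (Gamma K xs v M).Nonempty)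
    (x : E) (hxK : x ∈ K)
    (hx : ∀ i, ‖x - xs i‖ ≤
      sInf (Gamma K xs v (fun i => κ i * M i)) * v i / (κ i * M i)) :
    ∀ i, |f i x - v i| ≤ (κmax / κ i) * sInf (Gamma K xs v M) * v i := by
  intro i
  obtain ⟨j, hj⟩ := hκmax.1
  have hκmaxpos : 0 < κmax := hj ▸ hκ j
  set Γ := Gamma K xs v M
  set Γ' := Gamma K xs v (fun i => κ i * M i)
  have hbdd' : BddBelow Γ' := ⟨0, fun γ hγ => hγ.1⟩
  -- γ̃ ≤ κmax * γ for every γ ∈ Γ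
  have key : ∀ γ ∈ Γ, sInf Γ' ≤ κmax * γ := by
    intro γ ⟨hγ0, y, hyK, hy⟩
    refine csInf_le hbdd' ⟨by positivity, y, hyK, fun k => ?_⟩
    refine (hy k).trans ?_
    have hκk : κ k ≤ κmax := hκmax.2 ⟨k, rfl⟩
    have hMk := hM k
    have hκkpos := hκ k
    have hb : (fun i => κ i * M i) k = κ k * M k := rfl
    rw [hb, div_le_div_iff₀ hMk (by positivity)]
    have : γ * v k * κ k ≤ γ * v k * κmax :=
      mul_le_mul_of_nonneg_left hκk (mul_nonneg hγ0 (hvpos k).le)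
    nlinarith [hvpos k, hMk.le]
  have hγt : sInf Γ' ≤ κmax * sInf Γ := by
    have : sInf Γ' / κmax ≤ sInf Γ :=
      le_csInf hne fun γ hγ => (div_le_iff₀' hκmaxpos).2 (key γ hγ)
    linarith [(div_le_iff₀ hκmaxpos).1 this]
  have h1 : |f i x - v i| ≤ sInf Γ' * v i / κ i := by
    calc |f i x - v i| = |f i x - f i (xs i)| := by rw [hv i]
      _ ≤ M i * ‖x - xs i‖ := hf i x (xs i)
      _ ≤ M i * (sInf Γ' * v i / (κ i * M i)) :=
          mul_le_mul_of_nonneg_left (hx i) (hM i).le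
      _ = sInf Γ' * v i / κ i := by
          have h1 := (hM i).ne'
          have h2 := (hκ i).ne'
          field_simp
  refine h1.trans ?_
  rw [div_le_iff₀ (hκ i)] at *
  have := mul_le_mul_of_nonneg_right hγt (hvpos i).le
  calc sInf Γ' * v i ≤ κmax * sInf Γ * v i := by linarith
    _ = κmax / κ i * sInf Γ * v i * κ i := by
        have h2 := (hκ i).ne'
        field_simp
end
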